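/- If U is α-nonuniform exponentially stable (α < 0 admissible) and p > 0, then the Lyapunov-type function W(t,u) := ∫_t^∞ φ_α(ξ, Φ(t)u)^p dξ satisfies: (i) W(t₀,u) ≤ K φ_α(t₀,u)^p for some K > 0; and (ii) W(t,u) + ∫_{t₀}^{t} φ_α(ξ,u)^p dξ = W(t₀,u) for all t ≥ t₀ ≥ 0 and u ∈ Φ(t₀)C_α. -/

import Mathlib

open MeasureTheory Set

/-- φ_α(t,u) = sup_{τ ≥ t} e^{−α(τ−t)} ‖U(τ,t)u(t)‖. -/
noncomputable def phi {X : Type*} [NormedAddCommGroup X] [NormedSpace ℝ X]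
    (U : ℝ → ℝ → X →L[ℝ] X) (α t : ℝ) (u : ℝ → X) : ℝ :=
  ⨆ τ : Ici t, Real.exp (-α * ((τ : ℝ) - t)) * ‖U τ t (u t)‖

/-- (Φ(t)u)(τ) = U(τ,t)u(t) for τ ≥ t, u(τ) for τ < t. -/
noncomputable def Phim {X : Type*} [NormedAddCommGroup X] [NormedSpace ℝ X]
    (U : ℝ → ℝ → X →L[ℝ] X) (t : ℝ) (u : ℝ → X) : ℝ → X :=
  fun τ => if t ≤ τ then U τ t (u t) else u τ

/-- u ∈ C_α : u continuous on [0,∞) and sup_{t≥0} φ_α(t,u) < ∞. -/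
def MemC {X : Type*} [NormedAddCommGroup X] [NormedSpace ℝ X]
    (U : ℝ → ℝ → X →L[ℝ] X) (α : ℝ) (u : ℝ → X) : Prop :=
  ContinuousOn u (Ici 0) ∧
    ∃ C : ℝ, ∀ t, 0 ≤ t → ∀ τ, t ≤ τ →
      Real.exp (-α * (τ - t)) * ‖U τ t (u t)‖ ≤ C

/-- ‖u‖_α = sup_{t ≥ 0} φ_α(t,u). -/
noncomputable def normC {X : Type*} [NormedAddCommGroup X] [NormedSpace ℝ X]
    (U : ℝ → ℝ → X →L[ℝ] X) (α : ℝ) (u : ℝ → X) : ℝ :=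
  ⨆ t : Ici (0:ℝ), phi U α (t : ℝ) u

/-- γ is an admissible exponent for U. -/
def Admissible {X : Type*} [NormedAddCommGroup X] [NormedSpace ℝ X]
    (U : ℝ → ℝ → X →L[ℝ] X) (γ : ℝ) : Prop :=
  ∃ M : ℝ → ℝ, ContinuousOn M (Ici 0) ∧ (∀ s, 0 ≤ s → 0 < M s) ∧
    ∀ t s, 0 ≤ s → s ≤ t → ‖U t s‖ ≤ M s * Real.exp (γ * (t - s))

/-!
Along the orbit of `y` from `t₀`, `φ_α(ξ, ·) = e^{α(ξ-t₀)} sup_{τ ≥ ξ} e^{-α(τ-t₀)} ‖U(τ,t₀) y‖`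
(by the cocycle property), and the supremum decreases in `ξ`. Hence for `u ∈ Φ(t₀)C_α`, where
the supremum is finite, `φ_α(ξ, u) ≤ e^{α(ξ-t₀)} φ_α(t₀, u)`; integrating the `p`-th power gives
(i) with `K = 1/(-αp)`. Since `Φ(t)Φ(t₀) = Φ(t₀)` for `t ≥ t₀`, the three integrands in (ii) are
one and the same integrable function, so (ii) is additivity of the integral over `(t₀, ∞)`.
-/

noncomputable def tailSup (h : ℝ → ℝ) (ξ : ℝ) : ℝ :=
  ⨆ τ : Ici ξ, h τ

lemma tailSup_antitoneOn {h : ℝ → ℝ} {a : ℝ} (hb : BddAbove (h '' Ici a)) :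
    AntitoneOn (tailSup h) (Ici a) := by
  intro ξ₁ hξ₁ ξ₂ _ h₁₂
  have : Nonempty (Ici ξ₂) := ⟨⟨ξ₂, self_mem_Ici⟩⟩
  refine ciSup_le fun τ => le_ciSup_of_le ?_ ⟨τ, h₁₂.trans τ.2⟩ le_rfl
  exact hb.mono (range_subset_iff.2 fun τ => mem_image_of_mem h (Ici_subset_Ici.2 hξ₁ τ.2))

lemma integrableOn_exp_mul_sub_Ioi {c : ℝ} (hc : c < 0) (a : ℝ) :
    IntegrableOn (fun x => Real.exp (c * (x - a))) (Ioi a) := by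
  simp only [mul_sub, Real.exp_sub, div_eq_mul_inv]
  exact (integrableOn_exp_mul_Ioi hc a).mul_const _

lemma integral_exp_mul_sub_Ioi {c : ℝ} (hc : c < 0) (a : ℝ) :
    ∫ x in Ioi a, Real.exp (c * (x - a)) = (-c)⁻¹ := by
  simp only [mul_sub, Real.exp_sub, div_eq_mul_inv]
  rw [integral_mul_const, integral_exp_mul_Ioi hc]
  field_simp [(Real.exp_pos (c * a)).ne', hc.ne]

lemma integral_Ioi_le_of_norm_le_exp {g : ℝ → ℝ} {a c C : ℝ} (hc : c < 0)
    (hg : ∀ x ∈ Ioi a, ‖g x‖ ≤ C * Real.exp (c * (x - a))) :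
    ∫ x in Ioi a, g x ≤ C * (-c)⁻¹ := by
  calc ∫ x in Ioi a, g x ≤ ‖∫ x in Ioi a, g x‖ := Real.le_norm_self _
    _ ≤ ∫ x in Ioi a, C * Real.exp (c * (x - a)) :=
        norm_integral_le_of_norm_le ((integrableOn_exp_mul_sub_Ioi hc a).const_mul C)
          ((ae_restrict_iff' measurableSet_Ioi).2 (Filter.Eventually.of_forall hg))
    _ = C * (-c)⁻¹ := by rw [integral_const_mul, integral_exp_mul_sub_Ioi hc]

section EvolutionFamily

variable {X : Type*} [NormedAddCommGroup X] [NormedSpace ℝ X] {U : ℝ → ℝ → X →L[ℝ] X} {α : ℝ}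

lemma phi_nonneg (t : ℝ) (w : ℝ → X) : 0 ≤ phi U α t w :=
  Real.iSup_nonneg fun _ => mul_nonneg (Real.exp_pos _).le (norm_nonneg _)

lemma Phim_apply_of_le {t τ : ℝ} (h : t ≤ τ) (w : ℝ → X) : Phim U t w τ = U τ t (w t) :=
  if_pos h

variable (hComp : ∀ t τ s, 0 ≤ s → s ≤ τ → τ ≤ t → ∀ x : X, U t τ (U τ s x) = U t s x)
include hComp

lemma Phim_Phim_of_le {t₀ t : ℝ} (ht₀ : 0 ≤ t₀) (htt : t₀ ≤ t) (v : ℝ → X) :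
    Phim U t (Phim U t₀ v) = Phim U t₀ v := by
  funext τ
  by_cases hτ : t ≤ τ
  · rw [Phim_apply_of_le hτ, Phim_apply_of_le htt, Phim_apply_of_le (htt.trans hτ),
      hComp τ t t₀ ht₀ htt hτ]
  · exact if_neg hτ

lemma phi_eq_exp_mul_tailSup {t₀ ξ : ℝ} (ht₀ : 0 ≤ t₀) (hξ : t₀ ≤ ξ) (y : X) {w : ℝ → X}
    (hw : w ξ = U ξ t₀ y) :
    phi U α ξ w =
      Real.exp (α * (ξ - t₀)) * tailSup (fun τ => Real.exp (-α * (τ - t₀)) * ‖U τ t₀ y‖) ξ := by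
  rw [phi, tailSup, Real.mul_iSup_of_nonneg (Real.exp_pos _).le]
  refine iSup_congr fun τ => ?_
  rw [hw, hComp τ ξ t₀ ht₀ hξ τ.2, ← mul_assoc, ← Real.exp_add]
  ring_nf

lemma phi_Phim_le_exp_mul {v : ℝ → X} (hv : MemC U α v) {t₀ s ξ : ℝ} (ht₀ : 0 ≤ t₀)
    (hs : t₀ ≤ s) (hξ : s ≤ ξ) :
    phi U α ξ (Phim U t₀ v) ≤ Real.exp (α * (ξ - s)) * phi U α s (Phim U t₀ v) := by
  obtain ⟨C, hC⟩ := hv.2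
  set h : ℝ → ℝ := fun τ => Real.exp (-α * (τ - t₀)) * ‖U τ t₀ (v t₀)‖
  have hb : BddAbove (h '' Ici t₀) := ⟨C, by rintro _ ⟨τ, hτ, rfl⟩; exact hC t₀ ht₀ τ hτ⟩
  rw [phi_eq_exp_mul_tailSup hComp ht₀ (hs.trans hξ) _ (Phim_apply_of_le (hs.trans hξ) v),
    phi_eq_exp_mul_tailSup hComp ht₀ hs _ (Phim_apply_of_le hs v), ← mul_assoc, ← Real.exp_add]
  calc Real.exp (α * (ξ - t₀)) * tailSup h ξ ≤ Real.exp (α * (ξ - t₀)) * tailSup h s :=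
        mul_le_mul_of_nonneg_left (tailSup_antitoneOn hb hs (hs.trans hξ) hξ) (Real.exp_pos _).le
    _ = Real.exp (α * (ξ - s) + α * (s - t₀)) * tailSup h s := by ring_nf

lemma antitoneOn_phi_Phim (hα : α ≤ 0) {v : ℝ → X} (hv : MemC U α v) {t₀ : ℝ} (ht₀ : 0 ≤ t₀) :
    AntitoneOn (fun ξ => phi U α ξ (Phim U t₀ v)) (Ici t₀) := by
  intro s hs ξ _ hsξ
  calc phi U α ξ (Phim U t₀ v) ≤ Real.exp (α * (ξ - s)) * phi U α s (Phim U t₀ v) :=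
        phi_Phim_le_exp_mul hComp hv ht₀ hs hsξ
    _ ≤ phi U α s (Phim U t₀ v) :=
        mul_le_of_le_one_left (phi_nonneg _ _)
          (Real.exp_le_one_iff.2 (mul_nonpos_of_nonpos_of_nonneg hα (sub_nonneg.2 hsξ)))

lemma norm_phi_Phim_rpow_le {v : ℝ → X} (hv : MemC U α v) {t₀ ξ : ℝ} (ht₀ : 0 ≤ t₀)
    (hξ : t₀ ≤ ξ) {p : ℝ} (hp : 0 ≤ p) :
    ‖phi U α ξ (Phim U t₀ v) ^ p‖ ≤
      phi U α t₀ (Phim U t₀ v) ^ p * Real.exp (α * p * (ξ - t₀)) := by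
  rw [Real.norm_of_nonneg (Real.rpow_nonneg (phi_nonneg _ _) p), mul_comm,
    mul_right_comm, Real.exp_mul, ← Real.mul_rpow (Real.exp_pos _).le (phi_nonneg _ _)]
  exact Real.rpow_le_rpow (phi_nonneg _ _) (phi_Phim_le_exp_mul hComp hv ht₀ le_rfl hξ) hp

lemma integrableOn_phi_Phim_rpow (hα : α < 0) {v : ℝ → X} (hv : MemC U α v) {t₀ : ℝ}
    (ht₀ : 0 ≤ t₀) {p : ℝ} (hp : 0 < p) :
    IntegrableOn (fun ξ => phi U α ξ (Phim U t₀ v) ^ p) (Ioi t₀) := by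
  have hanti : AntitoneOn (fun ξ => phi U α ξ (Phim U t₀ v) ^ p) (Ioi t₀) :=
    fun s hs ξ hξ hsξ => Real.rpow_le_rpow (phi_nonneg _ _)
      (antitoneOn_phi_Phim hComp hα.le hv ht₀ (mem_Ici_of_Ioi hs) (mem_Ici_of_Ioi hξ) hsξ) hp.le
  refine ((integrableOn_exp_mul_sub_Ioi (mul_neg_of_neg_of_pos hα hp) t₀).const_mul
    (phi U α t₀ (Phim U t₀ v) ^ p)).mono'
    (aemeasurable_restrict_of_antitoneOn measurableSet_Ioi hanti).aestronglyMeasurable ?_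
  exact (ae_restrict_iff' measurableSet_Ioi).2 (Filter.Eventually.of_forall fun ξ hξ =>
    norm_phi_Phim_rpow_le hComp hv ht₀ (le_of_lt hξ) hp.le)

end EvolutionFamily

theorem stmt17_general {X : Type*} [NormedAddCommGroup X] [NormedSpace ℝ X]
    (U : ℝ → ℝ → X →L[ℝ] X)
    (hComp : ∀ t τ s, 0 ≤ s → s ≤ τ → τ ≤ t → ∀ x : X, U t τ (U τ s x) = U t s x)
    (α : ℝ) (hneg : α < 0)
    (p : ℝ) (hp : 0 < p) :
    -- W(t,u) := ∫_t^∞ φ_α(ξ, Φ(t)u)^p dξ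
    (∃ K : ℝ, 0 < K ∧ ∀ t₀, 0 ≤ t₀ → ∀ u : ℝ → X,
        (∃ v : ℝ → X, MemC U α v ∧ u = Phim U t₀ v) →
        (∫ ξ in Ioi t₀, phi U α ξ (Phim U t₀ u) ^ p) ≤ K * phi U α t₀ u ^ p) ∧
    (∀ t₀ t, 0 ≤ t₀ → t₀ ≤ t → ∀ u : ℝ → X,
        (∃ v : ℝ → X, MemC U α v ∧ u = Phim U t₀ v) →
        (∫ ξ in Ioi t, phi U α ξ (Phim U t u) ^ p) +
            (∫ ξ in t₀..t, phi U α ξ u ^ p) =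
          ∫ ξ in Ioi t₀, phi U α ξ (Phim U t₀ u) ^ p) := by
  have hαp : α * p < 0 := mul_neg_of_neg_of_pos hneg hp
  refine ⟨⟨(-(α * p))⁻¹, inv_pos.2 (neg_pos.2 hαp), ?_⟩, ?_⟩
  · rintro t₀ ht₀ _ ⟨v, hv, rfl⟩
    rw [Phim_Phim_of_le hComp ht₀ le_rfl, mul_comm]
    exact integral_Ioi_le_of_norm_le_exp hαp fun ξ hξ =>
      norm_phi_Phim_rpow_le hComp hv ht₀ (le_of_lt hξ) hp.le
  · rintro t₀ t ht₀ htt _ ⟨v, hv, rfl⟩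
    rw [Phim_Phim_of_le hComp ht₀ htt, Phim_Phim_of_le hComp ht₀ le_rfl,
      ← intervalIntegral.integral_Ioi_sub_Ioi
        (integrableOn_phi_Phim_rpow hComp hneg hv ht₀ hp) htt,
      add_sub_cancel]

theorem stmt17 {X : Type*} [NormedAddCommGroup X] [NormedSpace ℝ X] [CompleteSpace X]
    (U : ℝ → ℝ → X →L[ℝ] X)
    (hId : ∀ t, 0 ≤ t → ∀ x : X, U t t x = x)
    (hComp : ∀ t τ s, 0 ≤ s → s ≤ τ → τ ≤ t → ∀ x : X, U t τ (U τ s x) = U t s x)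
    (hCont : ∀ x : X, ContinuousOn (fun p : ℝ × ℝ => U p.1 p.2 x) {p | 0 ≤ p.2 ∧ p.2 ≤ p.1})
    (α : ℝ) (hneg : α < 0)
    (M : ℝ → ℝ) (hM : ContinuousOn M (Ici 0)) (hMpos : ∀ s, 0 ≤ s → 0 < M s)
    (hBound : ∀ t s, 0 ≤ s → s ≤ t → ‖U t s‖ ≤ M s * Real.exp (α * (t - s)))
    (p : ℝ) (hp : 0 < p) :
    -- W(t,u) := ∫_t^∞ φ_α(ξ, Φ(t)u)^p dξ
    (∃ K : ℝ, 0 < K ∧ ∀ t₀, 0 ≤ t₀ → ∀ u : ℝ → X,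
        (∃ v : ℝ → X, MemC U α v ∧ u = Phim U t₀ v) →
        (∫ ξ in Ioi t₀, phi U α ξ (Phim U t₀ u) ^ p) ≤ K * phi U α t₀ u ^ p) ∧
    (∀ t₀ t, 0 ≤ t₀ → t₀ ≤ t → ∀ u : ℝ → X,
        (∃ v : ℝ → X, MemC U α v ∧ u = Phim U t₀ v) →
        (∫ ξ in Ioi t, phi U α ξ (Phim U t u) ^ p) +
            (∫ ξ in t₀..t, phi U α ξ u ^ p) =
          ∫ ξ in Ioi t₀, phi U α ξ (Phim U t₀ u) ^ p) :=
  stmt17_general U hComp α hneg p hp
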